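/- arXiv:math/0401120 — 2 statements merged into one kernel-verified Lean document; each statement's English description precedes it below -/
import Mathlib

section
/- Let $B$ be an $n \times (n+1)$ integer matrix, with columns indexed by $0,1,\dots,n$, such that $B$ has rank $n$ over $\mathbb{Q}$ and such that for every column $j$ the sum of the absolute values of the entries in that column is at most $3$. Let $\nu = (\nu_0,\dots,\nu_n) \in \mathbb{Z}^{n+1}$ be a nonzero integer vector with $B\nu = 0$ whose entries have greatest common divisor $1$. Then $|\nu_j| \le 3^n$ for every $j$ with $0 \le j \le n$. -/
/-!
The vector of signed maximal minors `cⱼ = (-1)ʲ det B⁽ʲ⁾` of `B` (with `B⁽ʲ⁾` obtained by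
deleting column `j`) lies in the null space of `B` by Laplace expansion, and the column-sum
bound on determinants gives `|cⱼ| ≤ 3ⁿ`. Since `B` has rank `n`, its rational null space is the
line through `ν`, and a minor `det B⁽ʲ⁾` with `νⱼ ≠ 0` cannot vanish. Hence `c = q ν` with
`q ≠ 0`, and `q` is an integer because the entries of `ν` are coprime; so `|νⱼ| ≤ |cⱼ| ≤ 3ⁿ`.
-/

open Finset Matrix

namespace Matrix

theorem det_le_prod_sum_col {R S : Type*} [CommRing R] [Nontrivial R] [CommRing S]
    [LinearOrder S] [IsStrictOrderedRing S] {n : Type*} [Fintype n] [DecidableEq n]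
    (A : Matrix n n R) (abv : AbsoluteValue R S) :
    abv A.det ≤ ∏ j, ∑ i, abv (A i j) :=
  calc
    abv A.det = abv (∑ σ : Equiv.Perm n, Equiv.Perm.sign σ • ∏ j, A (σ j) j) :=
      congr_arg abv (det_apply _)
    _ ≤ ∑ σ : Equiv.Perm n, abv (Equiv.Perm.sign σ • ∏ j, A (σ j) j) := abv.sum_le _ _
    _ = ∑ σ : Equiv.Perm n, ∏ j, abv (A (σ j) j) :=
      sum_congr rfl fun σ _ => by rw [abv.map_units_int_smul, abv.map_prod]
    _ = ∑ f ∈ univ.map ⟨fun σ : Equiv.Perm n => ⇑σ, DFunLike.coe_injective⟩,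
          ∏ j, abv (A (f j) j) := by
      rw [sum_map]; rfl
    _ ≤ ∑ f : n → n, ∏ j, abv (A (f j) j) :=
      sum_le_univ_sum_of_nonneg fun _ => prod_nonneg fun _ _ => abv.nonneg _
    _ = ∏ j, ∑ i, abv (A i j) := by rw [prod_univ_sum, Fintype.piFinset_univ]

theorem exists_smul_eq_of_rank_add_one_eq {K : Type*} [Field K] {m ι : Type*} [Fintype ι]
    (A : Matrix m ι K) (hA : A.rank + 1 = Fintype.card ι) {v w : ι → K}
    (hv : A *ᵥ v = 0) (hv0 : v ≠ 0) (hw : A *ᵥ w = 0) : ∃ c : K, c • v = w := by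
  have hker : Module.finrank K (LinearMap.ker A.mulVecLin) = 1 := by
    have := LinearMap.finrank_range_add_finrank_ker A.mulVecLin
    rw [← rank, Module.finrank_fintype_fun_eq_card] at this
    omega
  obtain ⟨c, hc⟩ := (finrank_eq_one_iff_of_nonzero' (⟨v, hv⟩ : LinearMap.ker A.mulVecLin)
    (Subtype.coe_ne_coe.mp hv0)).mp hker ⟨w, hw⟩
  exact ⟨c, congrArg Subtype.val hc⟩

section SignedMinors

variable {n : ℕ}

theorem mulVec_insertNth_zero {R m : Type*} [NonUnitalNonAssocSemiring R]
    (A : Matrix m (Fin (n + 1)) R) (j : Fin (n + 1)) (w : Fin n → R) :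
    A *ᵥ j.insertNth 0 w = A.submatrix id j.succAbove *ᵥ w := by
  ext i
  simp [mulVec, dotProduct, Fin.sum_univ_succAbove _ j]

def signedMinors {R : Type*} [CommRing R] (B : Matrix (Fin n) (Fin (n + 1)) R)
    (j : Fin (n + 1)) : R :=
  (-1) ^ (j : ℕ) * (B.submatrix id j.succAbove).det

theorem mulVec_signedMinors {R : Type*} [CommRing R] (B : Matrix (Fin n) (Fin (n + 1)) R) :
    B *ᵥ signedMinors B = 0 := by
  ext i
  -- expand along its first row the matrix `B` with row `i` repeated on top
  have h : (of (vecCons (B i) B)).det = 0 :=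
    det_zero_of_row_eq (Fin.succ_ne_zero i).symm rfl
  rw [det_succ_row_zero] at h
  rw [Pi.zero_apply, ← h, mulVec, dotProduct]
  refine sum_congr rfl fun j _ => ?_
  rw [signedMinors, mul_left_comm, mul_assoc]
  rfl

theorem map_signedMinors {R S : Type*} [CommRing R] [CommRing S] (f : R →+* S)
    (B : Matrix (Fin n) (Fin (n + 1)) R) (j : Fin (n + 1)) :
    f (signedMinors B j) = signedMinors (B.map f) j := by
  simp [signedMinors, f.map_det, RingHom.mapMatrix_apply, submatrix_map]

theorem abs_signedMinors_le {R : Type*} [CommRing R] [LinearOrder R] [IsStrictOrderedRing R]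
    {B : Matrix (Fin n) (Fin (n + 1)) R} {c : R} (hcol : ∀ j, ∑ i, |B i j| ≤ c)
    (j : Fin (n + 1)) : |signedMinors B j| ≤ c ^ n := by
  rw [signedMinors, abs_mul, abs_pow, abs_neg, abs_one, one_pow, one_mul]
  calc |(B.submatrix id j.succAbove).det|
      ≤ ∏ k, ∑ i, |B i (j.succAbove k)| := det_le_prod_sum_col _ AbsoluteValue.abs
    _ ≤ ∏ _k : Fin n, c :=
      prod_le_prod (fun _ _ => sum_nonneg fun _ _ => abs_nonneg _) fun _ _ => hcol _
    _ = c ^ n := by simp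

theorem signedMinors_ne_zero_of_rank_eq {K : Type*} [Field K]
    {A : Matrix (Fin n) (Fin (n + 1)) K} (hA : A.rank = n) {v : Fin (n + 1) → K}
    (hv : A *ᵥ v = 0) {j : Fin (n + 1)} (hvj : v j ≠ 0) : signedMinors A j ≠ 0 := by
  refine mul_ne_zero (pow_ne_zero _ (neg_ne_zero.mpr one_ne_zero)) fun hdet => ?_
  obtain ⟨w, hw0, hw⟩ := exists_mulVec_eq_zero_iff.mpr hdet
  obtain ⟨c, hc⟩ := exists_smul_eq_of_rank_add_one_eq A (by simp [hA]) hv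
    (fun h => hvj (congrFun h j)) (w := j.insertNth 0 w) (by rw [mulVec_insertNth_zero, hw])
  have hc0 : c = 0 := by simpa [hvj] using congrFun hc j
  exact hw0 (funext fun k => by simpa [hc0] using (congrFun hc (j.succAbove k)).symm)

end SignedMinors

end Matrix

theorem Int.exists_mul_eq_of_rat_mul_eq {ι : Type*} [Fintype ι] {ν c : ι → ℤ}
    (hgcd : univ.gcd ν = 1) {q : ℚ} (hq : ∀ j, q * ν j = c j) :
    ∃ m : ℤ, ∀ j, m * ν j = c j := by
  have hden : ∀ j, (q.den : ℤ) ∣ ν j := fun j => by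
    have hcop : IsCoprime (q.den : ℤ) q.num := by
      simpa [Int.isCoprime_iff_gcd_eq_one, Int.gcd] using q.reduced.symm
    refine hcop.dvd_of_dvd_mul_left ⟨c j, ?_⟩
    have : (q.num : ℚ) = q * q.den := (Rat.mul_den_eq_num q).symm
    exact_mod_cast (by rw [this, ← hq j]; ring : (q.num * ν j : ℚ) = q.den * c j)
  have hden_one : q.den = 1 := by
    have : (q.den : ℤ) ∣ 1 := hgcd ▸ Finset.dvd_gcd fun j _ => hden j
    exact_mod_cast Int.eq_one_of_dvd_one (by positivity) this
  refine ⟨q.num, fun j => ?_⟩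
  exact_mod_cast (Rat.den_eq_one_iff q).mp hden_one ▸ hq j

theorem nullspace_generator_entry_bound_general (n : ℕ) (B : Matrix (Fin n) (Fin (n + 1)) ℤ)
    (hrank : (B.map (fun x : ℤ => (x : ℚ))).rank = n)
    (hcol : ∀ j : Fin (n + 1), ∑ i : Fin n, |B i j| ≤ 3)
    (ν : Fin (n + 1) → ℤ)
    (hnull : B.mulVec ν = 0)
    (hgcd : Finset.univ.gcd ν = 1) :
    ∀ j, |ν j| ≤ 3 ^ n := by
  set Bℚ := B.map (fun x : ℤ => (x : ℚ))
  set νℚ : Fin (n + 1) → ℚ := fun j => ν j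
  have hνℚ : Bℚ *ᵥ νℚ = 0 := by
    ext i
    have h := RingHom.map_mulVec (Int.castRingHom ℚ) B ν i
    rw [hnull] at h
    exact h.symm.trans (map_zero _)
  obtain ⟨j₀, hj₀⟩ : ∃ j, ν j ≠ 0 := by
    by_contra! h
    exact one_ne_zero (hgcd ▸ Finset.gcd_eq_zero_iff.mpr fun j _ => h j)
  have hminors (j) : ((signedMinors B j : ℤ) : ℚ) = signedMinors Bℚ j :=
    map_signedMinors (Int.castRingHom ℚ) B j
  obtain ⟨q, hq⟩ := exists_smul_eq_of_rank_add_one_eq Bℚ (by simp [hrank]) hνℚ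
    (fun h => hj₀ (by simpa [νℚ] using congrFun h j₀)) (mulVec_signedMinors Bℚ)
  obtain ⟨m, hm⟩ := Int.exists_mul_eq_of_rat_mul_eq hgcd (q := q) (c := signedMinors B)
    fun j => (congrFun hq j).trans (hminors j).symm
  have hm0 : m ≠ 0 := by
    rintro rfl
    refine signedMinors_ne_zero_of_rank_eq hrank hνℚ (j := j₀) (by simpa [νℚ]) ?_
    rw [← hminors, ← hm, zero_mul, Int.cast_zero]
  intro j
  calc |ν j| ≤ |m| * |ν j| := le_mul_of_one_le_left (abs_nonneg _) (Int.one_le_abs hm0)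
    _ = |signedMinors B j| := by rw [← hm, abs_mul]
    _ ≤ 3 ^ n := abs_signedMinors_le hcol j

/-- Let `B` be an `n × (n+1)` integer matrix of rank `n` over `ℚ`, each of whose
columns has entries with absolute values summing to at most `3`.  If `ν` is a nonzero
integer vector in the null space of `B` whose entries have greatest common divisor `1`,
then every entry of `ν` satisfies `|νⱼ| ≤ 3ⁿ`. -/
theorem nullspace_generator_entry_bound (n : ℕ) (B : Matrix (Fin n) (Fin (n + 1)) ℤ)
    (hrank : (B.map (fun x : ℤ => (x : ℚ))).rank = n)
    (hcol : ∀ j : Fin (n + 1), ∑ i : Fin n, |B i j| ≤ 3)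
    (ν : Fin (n + 1) → ℤ) (hν : ν ≠ 0)
    (hnull : B.mulVec ν = 0)
    (hgcd : Finset.univ.gcd ν = 1) :
    ∀ j, |ν j| ≤ 3 ^ n :=
  nullspace_generator_entry_bound_general n B hrank hcol ν hnull hgcd
end

section
/- For every positive integer $N$ and every real number $x > 2$ with $N < e^{x/87}$, there exists a prime number $p < x$ such that $p$ does not divide $N$. (In particular, for every positive integer $N \ge 2$ there is a prime $p < 87 \log N + 3$ not dividing $N$.) -/
open Finset in
lemma lem1 (n : ℕ) (hn : 4 ≤ n) :
    4 ^ n ≤ n * ((2 * n) ^ Nat.sqrt (2 * n) * ∏ p ∈ (2 * n + 1).primesBelow, p) := by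
  have h0 : 0 < 2 * n := by omega
  have key : Nat.centralBinom n ≤
      (2 * n) ^ Nat.sqrt (2 * n) * ∏ p ∈ (2 * n + 1).primesBelow, p := by
    rw [← Nat.prod_pow_factorization_centralBinom n]
    have hsub : (2 * n + 1).primesBelow ⊆ Finset.range (2 * n + 1) :=
      Finset.filter_subset _ _
    have h1 : (∏ p ∈ Finset.range (2 * n + 1), p ^ (Nat.centralBinom n).factorization p)
        = ∏ p ∈ (2 * n + 1).primesBelow, p ^ (Nat.centralBinom n).factorization p := by
      refine (Finset.prod_subset hsub ?_).symm
      intro p hp hnp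
      have : ¬ p.Prime := by
        intro hpp
        exact hnp (Nat.mem_primesBelow.mpr ⟨Finset.mem_range.mp hp, hpp⟩)
      rw [Nat.factorization_eq_zero_of_not_prime _ this, pow_zero]
    rw [h1, ← Finset.prod_filter_mul_prod_filter_not ((2 * n + 1).primesBelow)
      (fun p => p * p ≤ 2 * n)]
    have hsmall : (∏ p ∈ (2 * n + 1).primesBelow.filter (fun p => p * p ≤ 2 * n),
        p ^ (Nat.centralBinom n).factorization p) ≤ (2 * n) ^ Nat.sqrt (2 * n) := by
      calc (∏ p ∈ (2 * n + 1).primesBelow.filter (fun p => p * p ≤ 2 * n),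
            p ^ (Nat.centralBinom n).factorization p)
          ≤ ∏ _p ∈ (2 * n + 1).primesBelow.filter (fun p => p * p ≤ 2 * n), (2 * n) := by
            refine Finset.prod_le_prod' ?_
            intro p _
            rw [Nat.centralBinom]
            exact Nat.pow_factorization_choose_le h0
        _ = (2 * n) ^ ((2 * n + 1).primesBelow.filter (fun p => p * p ≤ 2 * n)).card := by
            rw [Finset.prod_const]
        _ ≤ (2 * n) ^ Nat.sqrt (2 * n) := by
            refine Nat.pow_le_pow_right (by omega) ?_
            have : ((2 * n + 1).primesBelow.filter (fun p => p * p ≤ 2 * n)) ⊆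
                Finset.Icc 2 (Nat.sqrt (2 * n)) := by
              intro p hp
              rw [Finset.mem_filter] at hp
              have hpp := Nat.prime_of_mem_primesBelow hp.1
              exact Finset.mem_Icc.mpr ⟨hpp.two_le, Nat.le_sqrt.mpr hp.2⟩
            calc _ ≤ (Finset.Icc 2 (Nat.sqrt (2 * n))).card := Finset.card_le_card this
              _ ≤ _ := by rw [Nat.card_Icc]; omega
    have hlarge : (∏ p ∈ (2 * n + 1).primesBelow.filter (fun p => ¬ p * p ≤ 2 * n),
        p ^ (Nat.centralBinom n).factorization p) ≤ ∏ p ∈ (2 * n + 1).primesBelow, p := by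
      calc (∏ p ∈ (2 * n + 1).primesBelow.filter (fun p => ¬ p * p ≤ 2 * n),
            p ^ (Nat.centralBinom n).factorization p)
          ≤ ∏ p ∈ (2 * n + 1).primesBelow.filter (fun p => ¬ p * p ≤ 2 * n), p := by
            refine Finset.prod_le_prod' ?_
            intro p hp
            rw [Finset.mem_filter] at hp
            have h2 : 2 * n < p ^ 2 := by nlinarith [hp.2]
            have := Nat.factorization_choose_le_one (p := p) (n := 2 * n) (k := n) h2
            rw [Nat.centralBinom]
            calc p ^ (Nat.choose (2 * n) n).factorization p ≤ p ^ 1 :=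
                  Nat.pow_le_pow_right (Nat.prime_of_mem_primesBelow hp.1).pos this
              _ = p := pow_one p
        _ ≤ ∏ p ∈ (2 * n + 1).primesBelow, p := by
            refine Finset.prod_le_prod_of_subset_of_one_le' (Finset.filter_subset _ _) ?_
            intro p hp _
            exact (Nat.prime_of_mem_primesBelow hp).pos
    exact Nat.mul_le_mul hsmall hlarge
  calc 4 ^ n ≤ n * Nat.centralBinom n := (Nat.four_pow_lt_mul_centralBinom n hn).le
    _ ≤ _ := Nat.mul_le_mul_left n key


lemma lem2 (n : ℕ) (hn : 3000 ≤ n) :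
    Real.exp ((2 * n + 2 : ℝ) / 87) * ((n : ℝ) * (2 * n : ℝ) ^ Nat.sqrt (2 * n))
      ≤ 4 ^ n := by
  have hn' : (3000 : ℝ) ≤ (n : ℝ) := by exact_mod_cast hn
  set y : ℝ := (2 * n : ℝ) with hy_def
  set k : ℕ := Nat.sqrt (2 * n) with hk_def
  have hy : (6000 : ℝ) ≤ y := by rw [hy_def]; linarith
  have hy0 : (0 : ℝ) < y := by linarith
  have hy1 : (1 : ℝ) ≤ y := by linarith
  have hn0 : (0 : ℝ) < (n : ℝ) := by linarith
  -- rewrite both sides as exponentials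
  have hL : Real.exp ((2 * n + 2 : ℝ) / 87) * ((n : ℝ) * y ^ k)
      = Real.exp ((2 * n + 2 : ℝ) / 87 + (Real.log n + k * Real.log y)) := by
    rw [Real.exp_add, Real.exp_add, Real.exp_log hn0, ← Real.log_pow,
      Real.exp_log (pow_pos hy0 k)]
  have hR : (4 : ℝ) ^ n = Real.exp (n * Real.log 4) := by
    rw [← Real.log_pow, Real.exp_log (pow_pos (by norm_num) n)]
  rw [hL, hR, Real.exp_le_exp]
  -- analytic bounds
  have f1 : Real.log y ≤ 8 * y ^ ((8 : ℝ)⁻¹) := by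
    have h := Real.log_le_rpow_div hy0.le (show (0:ℝ) < 8⁻¹ by norm_num)
    rw [div_eq_mul_inv, inv_inv] at h
    linarith
  have f2 : Real.log n ≤ Real.log y := by
    apply Real.log_le_log hn0
    rw [hy_def]; linarith
  have f3 : (k : ℝ) ≤ y ^ ((2 : ℝ)⁻¹) := by
    have hk2 : ((k : ℝ)) ^ 2 ≤ y := by
      rw [hk_def, hy_def]
      exact_mod_cast Nat.sqrt_le' (2 * n)
    have h := Real.le_sqrt_of_sq_le hk2
    rwa [Real.sqrt_eq_rpow, one_div] at h
  have f4 : y ^ ((2 : ℝ)⁻¹) * y ^ ((8 : ℝ)⁻¹) = y ^ ((5 : ℝ)/8) := by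
    rw [← Real.rpow_add hy0]; norm_num
  have f5 : y ^ ((8 : ℝ)⁻¹) ≤ y ^ ((5 : ℝ)/8) :=
    Real.rpow_le_rpow_of_exponent_le hy1 (by norm_num)
  have f6 : 26 * y ^ ((5 : ℝ)/8) ≤ y := by
    have hsplit : y ^ ((5 : ℝ)/8) * y ^ ((3 : ℝ)/8) = y := by
      rw [← Real.rpow_add hy0]; norm_num
    have h26 : (26 : ℝ) ≤ y ^ ((3 : ℝ)/8) := by
      have hpow : ((26 : ℝ)) ^ (8 : ℕ) ≤ (y ^ ((3 : ℝ)/8)) ^ (8 : ℕ) := by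
        have heq : (y ^ ((3 : ℝ)/8)) ^ (8 : ℕ) = y ^ (3 : ℕ) := by
          rw [← Real.rpow_natCast (y ^ ((3 : ℝ)/8)) 8, ← Real.rpow_mul hy0.le,
            ← Real.rpow_natCast y 3]
          norm_num
        rw [heq]
        calc ((26 : ℝ)) ^ (8 : ℕ) ≤ (6000 : ℝ) ^ (3 : ℕ) := by norm_num
          _ ≤ y ^ (3 : ℕ) := pow_le_pow_left₀ (by norm_num) hy 3
      exact le_of_pow_le_pow_left₀ (by norm_num) (by positivity) hpow
    nlinarith [Real.rpow_pos_of_pos hy0 ((5:ℝ)/8)]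
  have f7 : (0.6931471803 : ℝ) ≤ Real.log 2 := Real.log_two_gt_d9.le
  have flog4 : Real.log 4 = 2 * Real.log 2 := by
    rw [show (4:ℝ) = 2 ^ 2 by norm_num, Real.log_pow]; norm_num
  have f8 : (k : ℝ) * Real.log y ≤ 8 * y ^ ((5 : ℝ)/8) := by
    calc (k : ℝ) * Real.log y ≤ y ^ ((2 : ℝ)⁻¹) * (8 * y ^ ((8 : ℝ)⁻¹)) := by
          apply mul_le_mul f3 f1 (Real.log_nonneg hy1) (by positivity)
      _ = 8 * (y ^ ((2 : ℝ)⁻¹) * y ^ ((8 : ℝ)⁻¹)) := by ring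
      _ = 8 * y ^ ((5 : ℝ)/8) := by rw [f4]
  have f9 : Real.log n ≤ 8 * y ^ ((5 : ℝ)/8) := by
    calc Real.log n ≤ Real.log y := f2
      _ ≤ 8 * y ^ ((8 : ℝ)⁻¹) := f1
      _ ≤ 8 * y ^ ((5 : ℝ)/8) := by linarith
  have fgoal : (n : ℝ) * Real.log 4 = y * Real.log 2 := by
    rw [flog4, hy_def]; ring
  have fy2 : (0.6931471803 : ℝ) * y ≤ y * Real.log 2 := by nlinarith [f7, hy]
  have hyn : y = 2 * (n : ℝ) := hy_def
  linarith [f6, f8, f9, fgoal, fy2, hy]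


private lemma primesBelow_prod_mono {m k : ℕ} (h : m ≤ k) :
    (∏ p ∈ m.primesBelow, p) ≤ ∏ p ∈ k.primesBelow, p := by
  refine Finset.prod_le_prod_of_subset_of_one_le' ?_ ?_
  · intro p hp
    rw [Nat.mem_primesBelow] at hp ⊢
    exact ⟨lt_of_lt_of_le hp.1 h, hp.2⟩
  · intro p hp _
    exact (Nat.prime_of_mem_primesBelow hp).pos

private lemma exp_nat_le_of_le {a : ℝ} {c : ℕ} (hc : Real.exp 1 ^ c ≤ a)
    {x : ℝ} (hx : x ≤ c) : Real.exp x ≤ a := by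
  calc Real.exp x ≤ Real.exp c := Real.exp_le_exp.mpr hx
    _ = Real.exp 1 ^ c := (Real.exp_one_pow c).symm
    _ ≤ a := hc

private lemma mainClaim (m : ℕ) (hm : 3 ≤ m) :
    Real.exp ((m : ℝ) / 87) ≤ ((∏ p ∈ m.primesBelow, p : ℕ) : ℝ) := by
  have two_mem : 2 ∈ m.primesBelow := Nat.mem_primesBelow.mpr ⟨by omega, Nat.prime_two⟩
  rcases le_or_gt m 60 with h60 | h60
  · -- tiny case: the prime 2 suffices
    have h2 : (2 : ℕ) ≤ ∏ p ∈ m.primesBelow, p := by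
      exact Finset.single_le_prod' (f := fun p => p)
        (fun p hp => (Nat.prime_of_mem_primesBelow hp).pos) two_mem
    have hexp : Real.exp ((m : ℝ) / 87) ≤ 2 := by
      rw [← Real.exp_log (show (0:ℝ) < 2 by norm_num)]
      apply Real.exp_le_exp.mpr
      have hlog := Real.log_two_gt_d9
      have : (m : ℝ) ≤ 60 := by exact_mod_cast h60
      linarith
    calc Real.exp ((m : ℝ) / 87) ≤ 2 := hexp
      _ ≤ _ := by exact_mod_cast h2
  rcases le_or_gt m 4176 with h4176 | h4176
  · -- use primes below 61
    have hQ : (∏ p ∈ (61).primesBelow, p) = 1922760350154212639070 := by decide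
    have hle : (1922760350154212639070 : ℕ) ≤ ∏ p ∈ m.primesBelow, p := by
      rw [← hQ]; exact primesBelow_prod_mono (by omega)
    have hexp : Real.exp ((m : ℝ) / 87) ≤ 1922760350154212639070 := by
      refine exp_nat_le_of_le (c := 48) ?_ ?_
      · calc Real.exp 1 ^ 48 ≤ (2.7182818286 : ℝ) ^ 48 :=
            pow_le_pow_left₀ (Real.exp_pos 1).le Real.exp_one_lt_d9.le 48
          _ ≤ _ := by norm_num
      · have : (m : ℝ) ≤ 4176 := by exact_mod_cast h4176
        norm_num; linarith
    calc Real.exp ((m : ℝ) / 87) ≤ 1922760350154212639070 := hexp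
      _ ≤ _ := by exact_mod_cast hle
  rcases le_or_gt m 6003 with h6003 | h6003
  · -- use primes below 80
    have hQ : (∏ p ∈ (80).primesBelow, p) = 3217644767340672907899084554130 := by decide
    have hle : (3217644767340672907899084554130 : ℕ) ≤ ∏ p ∈ m.primesBelow, p := by
      rw [← hQ]; exact primesBelow_prod_mono (by omega)
    have hexp : Real.exp ((m : ℝ) / 87) ≤ 3217644767340672907899084554130 := by
      refine exp_nat_le_of_le (c := 69) ?_ ?_
      · calc Real.exp 1 ^ 69 ≤ (2.7182818286 : ℝ) ^ 69 :=
            pow_le_pow_left₀ (Real.exp_pos 1).le Real.exp_one_lt_d9.le 69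
          _ ≤ _ := by norm_num
      · have : (m : ℝ) ≤ 6003 := by exact_mod_cast h6003
        norm_num; linarith
    calc Real.exp ((m : ℝ) / 87) ≤ 3217644767340672907899084554130 := hexp
      _ ≤ _ := by exact_mod_cast hle
  · -- asymptotic case
    set n : ℕ := (m - 1) / 2 with hn_def
    have hn : 3000 ≤ n := by omega
    have h1 : 2 * n + 1 ≤ m := by omega
    have h2 : m ≤ 2 * n + 2 := by omega
    have c1 : (4 : ℝ) ^ n ≤ ((n : ℝ) * (2 * n : ℝ) ^ Nat.sqrt (2 * n)) *
        ((∏ p ∈ (2 * n + 1).primesBelow, p : ℕ) : ℝ) := by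
      have := lem1 n (by omega)
      have hcast : ((4 ^ n : ℕ) : ℝ) ≤
          ((n * ((2 * n) ^ Nat.sqrt (2 * n) * ∏ p ∈ (2 * n + 1).primesBelow, p) : ℕ) : ℝ) := by
        exact_mod_cast this
      push_cast at hcast
      calc (4 : ℝ) ^ n = ((4:ℕ) : ℝ) ^ n := by norm_num
        _ ≤ _ := by push_cast; linarith [hcast]
    have c2 := lem2 n hn
    have hD : (0 : ℝ) < (n : ℝ) * (2 * n : ℝ) ^ Nat.sqrt (2 * n) := by
      have : (0:ℝ) < (n:ℝ) := by exact_mod_cast (by omega : 0 < n)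
      positivity
    have key : Real.exp ((2 * n + 2 : ℝ) / 87) ≤
        ((∏ p ∈ (2 * n + 1).primesBelow, p : ℕ) : ℝ) := by
      have h := le_trans c2 c1
      exact le_of_mul_le_mul_right (h.trans_eq (mul_comm _ _)) hD
    calc Real.exp ((m : ℝ) / 87) ≤ Real.exp ((2 * n + 2 : ℝ) / 87) := by
          apply Real.exp_le_exp.mpr
          have : (m : ℝ) ≤ (2 * n + 2 : ℝ) := by exact_mod_cast h2
          linarith
      _ ≤ ((∏ p ∈ (2 * n + 1).primesBelow, p : ℕ) : ℝ) := key
      _ ≤ _ := by exact_mod_cast primesBelow_prod_mono h1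

/-- For every positive integer `N` and real `x > 2` with `N < e^{x/87}`, there is a
prime `p < x` not dividing `N`.  In particular, for every `N ≥ 2` there is a prime
`p < 87 log N + 3` not dividing `N`. -/
theorem exists_prime_lt_not_dvd :
    (∀ N : ℕ, 0 < N → ∀ x : ℝ, 2 < x → (N : ℝ) < Real.exp (x / 87) →
      ∃ p : ℕ, p.Prime ∧ (p : ℝ) < x ∧ ¬ p ∣ N) ∧
    (∀ N : ℕ, 2 ≤ N →
      ∃ p : ℕ, p.Prime ∧ (p : ℝ) < 87 * Real.log N + 3 ∧ ¬ p ∣ N) := by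
  have part1 : ∀ N : ℕ, 0 < N → ∀ x : ℝ, 2 < x → (N : ℝ) < Real.exp (x / 87) →
      ∃ p : ℕ, p.Prime ∧ (p : ℝ) < x ∧ ¬ p ∣ N := by
    intro N hN x hx hlt
    by_contra hcon
    push_neg at hcon
    set m : ℕ := ⌈x⌉₊ with hm_def
    have hm3 : 3 ≤ m := by
      have : (2 : ℕ) < ⌈x⌉₊ := Nat.lt_ceil.mpr (by exact_mod_cast hx)
      omega
    have hdvd : (∏ p ∈ m.primesBelow, p) ∣ N := by
      refine Finset.prod_primes_dvd _
        (fun p hp => (Nat.prime_of_mem_primesBelow hp).prime) ?_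
      intro p hp
      have hpx : (p : ℝ) < x := Nat.lt_ceil.mp (Nat.lt_of_mem_primesBelow hp)
      exact hcon p (Nat.prime_of_mem_primesBelow hp) hpx
    have hle : (∏ p ∈ m.primesBelow, p) ≤ N := Nat.le_of_dvd hN hdvd
    have h1 : ((∏ p ∈ m.primesBelow, p : ℕ) : ℝ) ≤ N := by exact_mod_cast hle
    have h2 : Real.exp (x / 87) ≤ Real.exp ((m : ℝ) / 87) := by
      apply Real.exp_le_exp.mpr
      have := Nat.le_ceil x
      have hxm : x ≤ (m : ℝ) := this
      linarith
    have := mainClaim m hm3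
    linarith
  refine ⟨part1, ?_⟩
  intro N hN
  have hN0 : 0 < N := by omega
  have hN2 : (2 : ℝ) ≤ (N : ℝ) := by exact_mod_cast hN
  have hlogN : Real.log 2 ≤ Real.log N := Real.log_le_log (by norm_num) hN2
  have hlog2 := Real.log_two_gt_d9
  refine part1 N hN0 (87 * Real.log N + 3) (by linarith) ?_
  have hexp : Real.exp ((87 * Real.log N + 3) / 87) = (N : ℝ) * Real.exp (3 / 87) := by
    rw [show (87 * Real.log N + 3) / 87 = Real.log N + 3 / 87 by ring, Real.exp_add,
      Real.exp_log (by exact_mod_cast hN0)]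
  have h1 : (1 : ℝ) < Real.exp (3 / 87) := by
    have := Real.add_one_le_exp (3 / 87 : ℝ); linarith
  rw [hexp]; nlinarith
end
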